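/- arXiv:2602.03496 — 2 statements merged into one kernel-verified Lean document; each statement's English description precedes it below -/
import Mathlib

section
/- Conditional version of Han's inequality used in the inductive step: for discrete random variables X_1,...,X_n (n ≥ 3) and any fixed index i, (n−2)·H(X_{1..n}) + H(X_i) ≤ Σ_{j ≠ i} H(X_{\{1,...,n\}∖\{j\}}), where all entropies are joint entropies of the indicated variable subsets. -/
noncomputable section

/-- Shannon entropy of a distribution on a finite type. -/
def entropy {α : Type*} [Fintype α] (p : α → ℝ) : ℝ :=
  -∑ a, p a * Real.log (p a)

variable {n : ℕ} {X : Fin n → Type*} [∀ i, Fintype (X i)]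

open scoped Classical in
/-- Marginal of coordinate `i` of a joint distribution. -/
def marginal (p : (∀ i, X i) → ℝ) (i : Fin n) (a : X i) : ℝ :=
  ∑ x : ∀ j, X j, if x i = a then p x else 0

open scoped Classical in
/-- Marginal of a joint distribution on the coordinates in `S`. -/
def subMarginal (p : (∀ i, X i) → ℝ) (S : Finset (Fin n)) (z : ∀ i : S, X i.1) : ℝ :=
  ∑ x : ∀ j, X j, if ∀ i : S, x i.1 = z i then p x else 0

open scoped Classical in
/-- Conditional joint distribution given that the coordinates in `S` equal `z`. -/
def condDist (p : (∀ i, X i) → ℝ) (S : Finset (Fin n)) (z : ∀ i : S, X i.1) :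
    (∀ i, X i) → ℝ :=
  fun y => if ∀ i : S, y i.1 = z i then p y / subMarginal p S z else 0

/-- Total correlation of the variables indexed by `S`. -/
def TCsub (p : (∀ i, X i) → ℝ) (S : Finset (Fin n)) : ℝ :=
  (∑ i ∈ S, entropy (marginal p i)) - entropy (subMarginal p S)

/-- Expected conditional total correlation of the variables in `S` given those in `C`. -/
def expCondTC (p : (∀ i, X i) → ℝ) (S C : Finset (Fin n)) : ℝ :=
  ∑ z : ∀ i : C, X i.1, subMarginal p C z * TCsub (condDist p C z) S

/-!
The engine is the Shannon inequality `H(Z, W) + H(g ∘ W) ≤ H(Z, g ∘ W) + H(W)`, i.e.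
`I(Z; W | g ∘ W) ≥ 0`, proved by Gibbs' argument `log t ≤ t - 1`. With `Z = Xⱼ`, `W = X₋ⱼ` and `g`
the restriction to `{i} ∪ T` (`j ∉ {i} ∪ T`) it reads
`H(X₁,…,Xₙ) + H(X_{{i} ∪ T}) ≤ H(X_{{i} ∪ T ∪ {j}}) + H(X₋ⱼ)`, and summing these while `T` grows
from `∅` to `{1,…,n} ∖ {i}` telescopes to the claim.
-/

open Finset

section Pushforward

variable {Ω α β γ : Type*} [Fintype Ω] (p : Ω → ℝ)

open scoped Classical in
def pushforward (f : Ω → β) (b : β) : ℝ :=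
  ∑ x, if f x = b then p x else 0

theorem sum_pushforward_mul [Fintype β] (f : Ω → β) (F : β → ℝ) :
    ∑ b, pushforward p f b * F b = ∑ x, p x * F (f x) := by
  classical
  simp only [pushforward, sum_mul, ite_mul, zero_mul]
  rw [sum_comm]
  simp

theorem sum_pushforward [Fintype β] (f : Ω → β) : ∑ b, pushforward p f b = ∑ x, p x := by
  simpa using sum_pushforward_mul p f 1

theorem pushforward_id : pushforward p id = p := by
  classical
  funext x
  simp [pushforward]

theorem pushforward_nonneg (hp0 : ∀ x, 0 ≤ p x) (f : Ω → β) (b : β) :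
    0 ≤ pushforward p f b :=
  sum_nonneg fun x _ => by split_ifs <;> simp [hp0]

theorem pushforward_pos (hp0 : ∀ x, 0 ≤ p x) (f : Ω → β) {x : Ω} (hx : 0 < p x) :
    0 < pushforward p f (f x) := by
  classical
  refine hx.trans_le ?_
  unfold pushforward
  simpa using single_le_sum (fun y _ => by split_ifs <;> simp [hp0])
    (mem_univ x) (f := fun y => if f y = f x then p y else 0)

theorem sum_pushforward_prod_left [Fintype γ] (Z : Ω → γ) (V : Ω → α) (a : α) :
    ∑ z, pushforward p (fun x => (Z x, V x)) (z, a) = pushforward p V a := by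
  classical
  simp only [pushforward, Prod.mk.injEq, ite_and]
  rw [sum_comm]
  simp

theorem entropy_pushforward [Fintype β] (f : Ω → β) :
    entropy (pushforward p f) = -∑ x, p x * Real.log (pushforward p f (f x)) := by
  rw [entropy, sum_pushforward_mul p f]

theorem entropy_pushforward_comp_of_injective [Fintype α] [Fintype β] (f : Ω → β)
    {e : β → α} (he : Function.Injective e) :
    entropy (pushforward p (e ∘ f)) = entropy (pushforward p f) := by
  classical
  have hrange : ∀ a ∉ Set.range e, pushforward p (e ∘ f) a = 0 := fun a ha =>
    sum_eq_zero fun x _ => if_neg fun h => ha ⟨f x, h⟩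
  have hcomp : ∀ b, pushforward p (e ∘ f) (e b) = pushforward p f b := fun b => by
    simp only [pushforward, Function.comp_apply, he.eq_iff]
  rw [entropy, entropy, neg_inj]
  exact (Fintype.sum_of_injective e he _ _ (fun a ha => by simp [hrange a ha])
    (fun b => by rw [hcomp])).symm

end Pushforward

section Submodularity

variable {Ω α β γ : Type*} [Fintype Ω] [Fintype β] [Fintype γ] (p : Ω → ℝ)

theorem sum_mul_pushforward_ratio_le (hp0 : ∀ x, 0 ≤ p x) (Z : Ω → γ) (W : Ω → β)
    (g : β → α) :
    ∑ x, p x * (pushforward p (fun x => (Z x, g (W x))) (Z x, g (W x)) * pushforward p W (W x) /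
      (pushforward p (fun x => (Z x, W x)) (Z x, W x) * pushforward p (g ∘ W) (g (W x))))
      ≤ ∑ x, p x := by
  set mZW := pushforward p (fun x => (Z x, W x))
  set mZgW := pushforward p (fun x => (Z x, g (W x)))
  set mgW := pushforward p (g ∘ W)
  set mW := pushforward p W
  calc _ = ∑ zw : γ × β, mZW zw * (mZgW (zw.1, g zw.2) * mW zw.2 / (mZW zw * mgW (g zw.2))) :=
        (sum_pushforward_mul p _ fun zw => _).symm
    _ ≤ ∑ zw : γ × β, mZgW (zw.1, g zw.2) * (mW zw.2 / mgW (g zw.2)) := by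
        refine sum_le_sum fun zw _ => ?_
        rcases eq_or_ne (mZW zw) 0 with h | h
        · rw [h, zero_mul]
          exact mul_nonneg (pushforward_nonneg p hp0 _ _)
            (div_nonneg (pushforward_nonneg p hp0 _ _) (pushforward_nonneg p hp0 _ _))
        · rw [← mul_div_assoc, ← mul_div_assoc, mul_div_mul_left _ _ h, mul_div_assoc]
    _ = ∑ w, mgW (g w) * (mW w / mgW (g w)) := by
        rw [Fintype.sum_prod_type, sum_comm]
        simp only [← sum_mul]
        exact sum_congr rfl fun w _ => by rw [sum_pushforward_prod_left]; rfl
    _ ≤ ∑ w, mW w := by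
        refine sum_le_sum fun w _ => ?_
        rcases eq_or_ne (mgW (g w)) 0 with h | h
        · rw [h, zero_mul]
          exact pushforward_nonneg p hp0 _ _
        · rw [mul_div_cancel₀ _ h]
    _ = ∑ x, p x := sum_pushforward p W

theorem entropy_pushforward_prod_add_le [Fintype α] (hp0 : ∀ x, 0 ≤ p x) (Z : Ω → γ)
    (W : Ω → β) (g : β → α) :
    entropy (pushforward p (fun x => (Z x, W x))) + entropy (pushforward p (g ∘ W)) ≤
      entropy (pushforward p (fun x => (Z x, g (W x)))) + entropy (pushforward p W) := by
  have log_le {a b c d : ℝ} (ha : 0 < a) (hb : 0 < b) (hc : 0 < c) (hd : 0 < d) :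
      Real.log a + Real.log b - Real.log c - Real.log d ≤ a * b / (c * d) - 1 := by
    have := Real.log_le_sub_one_of_pos (div_pos (mul_pos ha hb) (mul_pos hc hd))
    rwa [Real.log_div (mul_pos ha hb).ne' (mul_pos hc hd).ne', Real.log_mul ha.ne' hb.ne',
      Real.log_mul hc.ne' hd.ne', ← sub_sub] at this
  have hratio := sum_mul_pushforward_ratio_le p hp0 Z W g
  simp only [entropy_pushforward p, Function.comp_apply]
  set mZW := pushforward p (fun x => (Z x, W x))
  set mZgW := pushforward p (fun x => (Z x, g (W x)))
  set mgW := pushforward p (g ∘ W)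
  set mW := pushforward p W
  have hlog : ∀ x, p x * (Real.log (mZgW (Z x, g (W x))) + Real.log (mW (W x)) -
      Real.log (mZW (Z x, W x)) - Real.log (mgW (g (W x)))) ≤
      p x * (mZgW (Z x, g (W x)) * mW (W x) / (mZW (Z x, W x) * mgW (g (W x))) - 1) := by
    intro x
    rcases (hp0 x).eq_or_lt with h | h
    · simp [← h]
    exact mul_le_mul_of_nonneg_left (log_le (pushforward_pos p hp0 _ h)
      (pushforward_pos p hp0 _ h) (pushforward_pos p hp0 _ h) (pushforward_pos p hp0 (g ∘ W) h))
      h.le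
  have hsum := sum_le_sum fun x (_ : x ∈ univ) => hlog x
  simp only [mul_sub, mul_add, mul_one, sum_sub_distrib, sum_add_distrib] at hsum
  linarith

end Submodularity

section Marginals

variable (p : (∀ i, X i) → ℝ)

theorem subMarginal_eq_pushforward (S : Finset (Fin n)) :
    subMarginal p S = pushforward p S.restrict := by
  funext z
  refine sum_congr rfl fun x _ => ?_
  congr 1
  exact propext ⟨fun h => funext h, fun h i => congrFun h i⟩

theorem entropy_subMarginal_univ : entropy (subMarginal p univ) = entropy p := by
  have he : Function.Injective
      fun (y : ∀ i : (univ : Finset (Fin n)), X i) j => y ⟨j, mem_univ j⟩ :=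
    fun y y' h => funext fun j => congrFun h j
  rw [subMarginal_eq_pushforward, ← entropy_pushforward_comp_of_injective p _ he]
  exact congrArg entropy (pushforward_id p)

theorem entropy_subMarginal_singleton (i : Fin n) :
    entropy (subMarginal p {i}) = entropy (marginal p i) := by
  have he : Function.Injective fun (y : ∀ j : ({i} : Finset (Fin n)), X j) =>
      y ⟨i, mem_singleton_self i⟩ := by
    intro y y' h
    funext ⟨j, hj⟩
    obtain rfl := mem_singleton.mp hj
    exact h
  rw [subMarginal_eq_pushforward, ← entropy_pushforward_comp_of_injective p _ he]
  rfl

theorem entropy_subMarginal_insert (u : Fin n) (S : Finset (Fin n)) :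
    entropy (subMarginal p (insert u S)) =
      entropy (pushforward p fun x => (x u, S.restrict x)) := by
  have he : Function.Injective fun (y : ∀ i : (insert u S : Finset (Fin n)), X i) =>
      (y ⟨u, mem_insert_self u S⟩, restrict₂ (subset_insert u S) y) := by
    intro y y' h
    obtain ⟨hu, hS⟩ := Prod.mk.inj h
    funext ⟨j, hj⟩
    rcases mem_insert.mp hj with rfl | hj
    · exact hu
    · exact congrFun hS ⟨j, hj⟩
  rw [subMarginal_eq_pushforward, ← entropy_pushforward_comp_of_injective p _ he]
  rfl

theorem entropy_subMarginal_insert_add_le (hp0 : ∀ x, 0 ≤ p x) {A B : Finset (Fin n)}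
    (hAB : A ⊆ B) (u : Fin n) :
    entropy (subMarginal p (insert u B)) + entropy (subMarginal p A) ≤
      entropy (subMarginal p (insert u A)) + entropy (subMarginal p B) := by
  rw [entropy_subMarginal_insert, entropy_subMarginal_insert, subMarginal_eq_pushforward p A,
    subMarginal_eq_pushforward p B, ← restrict₂_comp_restrict hAB]
  exact entropy_pushforward_prod_add_le p hp0 (fun x => x u) B.restrict (restrict₂ hAB)

theorem card_mul_entropy_add_le (hp0 : ∀ x, 0 ≤ p x) (A T : Finset (Fin n))
    (hAT : Disjoint A T) :
    #T * entropy p + entropy (subMarginal p A) ≤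
      ∑ j ∈ T, entropy (subMarginal p {j}ᶜ) + entropy (subMarginal p (A ∪ T)) := by
  induction T using Finset.induction_on with
  | empty => rw [union_empty]; simp
  | @insert j T hjT ih =>
    obtain ⟨hjA, hAT⟩ := disjoint_insert_right.mp hAT
    have hsub : A ∪ T ⊆ {j}ᶜ := subset_compl_singleton.mpr (notMem_union.mpr ⟨hjA, hjT⟩)
    have step := entropy_subMarginal_insert_add_le p hp0 hsub j
    rw [insert_compl_self, entropy_subMarginal_univ] at step
    rw [sum_insert hjT, card_insert_of_notMem hjT, union_insert]
    push_cast
    linarith [ih hAT]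

end Marginals

theorem stmt_8_general (n : ℕ) (X : Fin n → Type*) [∀ i, Fintype (X i)]
    (p : (∀ i, X i) → ℝ) (hp0 : ∀ x, 0 ≤ p x) (i : Fin n) :
    ((n : ℝ) - 2) * entropy p + entropy (marginal p i) ≤
      ∑ j ∈ Finset.univ.erase i, entropy (subMarginal p ({j} : Finset (Fin n))ᶜ) := by
  have h := card_mul_entropy_add_le p hp0 {i} (univ.erase i)
    (disjoint_singleton_left.mpr (notMem_erase i univ))
  rw [← insert_eq, insert_erase (mem_univ i), entropy_subMarginal_univ,
    entropy_subMarginal_singleton] at h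
  have hcard : (#(univ.erase i) : ℝ) = n - 1 := by
    rw [eq_sub_iff_add_eq]
    exact_mod_cast (card_erase_add_one (mem_univ i)).trans (card_fin n)
  rw [hcard] at h
  linarith

/-- Conditional version of Han's inequality used in the inductive step:
`(n−2)·H(X₁,...,Xₙ) + H(Xᵢ) ≤ ∑_{j ≠ i} H(X₋ⱼ)`. -/
theorem stmt_8 (n : ℕ) (hn : 3 ≤ n) (X : Fin n → Type*) [∀ i, Fintype (X i)]
    (p : (∀ i, X i) → ℝ) (hp0 : ∀ x, 0 ≤ p x) (hp1 : ∑ x, p x = 1) (i : Fin n) :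
    ((n : ℝ) - 2) * entropy p + entropy (marginal p i) ≤
      ∑ j ∈ Finset.univ.erase i, entropy (subMarginal p ({j} : Finset (Fin n))ᶜ) :=
  stmt_8_general n X p hp0 i

end
end

section
/- Mixture bound on cumulative conditional total correlation over random orders: for discrete random variables X_1,...,X_n and a uniformly random permutation σ of {1,...,n} partitioned into K consecutive blocks A_1,...,A_K of equal size n/K (assuming K divides n), the expected sum over k of the conditional total correlations TC(X_{A_k} | X_{A_1 ∪ ... ∪ A_{k−1}}) is at most (1/K)·Σ_{i=1}^n H(X_i). -/
/-!
Write `H(C)` for the joint entropy of `X_C`, and `H(X_i | X_C) = H(C ∪ {i}) - H(C)`. The expected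
conditional total correlation of `X_S` given `X_C` is
`∑_{i ∈ S} H(X_i | X_C) - (H(S ∪ C) - H(C))`. Summed over the blocks of `σ`, the second terms
telescope to `H(X_1, …, X_n)`, which the chain rule along `σ` splits as
`∑_i H(X_i | variables before i)`. So the cumulative total correlation is
`∑_i [H(X_i | blocks before the block of i) - H(X_i | variables before i)]`.

Fix `i` and the relative order `τ` of the other variables, and let the position `t` of `i` vary.
Both conditioning sets are then prefixes of `τ`, of lengths `m⌊t/m⌋` and `t` (`m = n/K`), and
`G j = H(X_i | first j variables of τ)` is antitone by submodularity of entropy. Hence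
`∑_t (G (m⌊t/m⌋) - G t) ≤ ∑_t (G (m⌊t/m⌋) - G (m⌊t/m⌋ + m))`, which telescopes to
`m (G 0 - G n) ≤ m H(X_i)`, and averaging over the `n` positions of `i` gives `H(X_i) / K`.
-/

noncomputable section

variable {n : ℕ} {X : Fin n → Type*} [∀ i, Fintype (X i)]

open scoped Classical in
/-- The `k`-th block of the partition of the coordinates induced by the
permutation `σ` into `K` consecutive blocks of size `n / K`. -/
def permBlock {n K : ℕ} (σ : Equiv.Perm (Fin n)) (k : Fin K) : Finset (Fin n) :=
  Finset.univ.filter (fun i => ((σ.symm i : ℕ) / (n / K)) = (k : ℕ))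

open scoped Classical in
/-- The union of the blocks preceding the `k`-th block. -/
def permEarlier {n K : ℕ} (σ : Equiv.Perm (Fin n)) (k : Fin K) : Finset (Fin n) :=
  Finset.univ.filter (fun i => ((σ.symm i : ℕ) / (n / K)) < (k : ℕ))

open Finset Real

lemma mul_div_mul_log_div {q r : ℝ} (hr : 0 ≤ r) (hrq : r ≤ q) :
    q * (r / q * log (r / q)) = r * (log r - log q) := by
  rcases hr.eq_or_lt with rfl | hr
  · simp
  have hq : q ≠ 0 := (hr.trans_le hrq).ne'
  rw [log_div hr.ne' hq]
  field_simp

lemma mul_one_sub_div_le_mul_log {w a b c d : ℝ} (hw : 0 ≤ w) (ha : w ≤ a) (hb : w ≤ b)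
    (hc : w ≤ c) (hd : w ≤ d) :
    w * (1 - a * b / (c * d)) ≤ w * (log c + log d - log a - log b) := by
  rcases hw.eq_or_lt with rfl | hw
  · simp
  have hab : 0 < a * b := mul_pos (hw.trans_le ha) (hw.trans_le hb)
  have hcd : 0 < c * d := mul_pos (hw.trans_le hc) (hw.trans_le hd)
  have hlog := log_le_sub_one_of_pos (div_pos hab hcd)
  rw [log_div hab.ne' hcd.ne', log_mul (hw.trans_le ha).ne' (hw.trans_le hb).ne',
    log_mul (hw.trans_le hc).ne' (hw.trans_le hd).ne'] at hlog
  exact mul_le_mul_of_nonneg_left (by linarith) hw.le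

section Law

variable {Ω α β γ : Type*} [Fintype Ω] (p : Ω → ℝ)

open scoped Classical in
def law (f : Ω → α) (a : α) : ℝ :=
  ∑ x, if f x = a then p x else 0

open scoped Classical in
def condOn (f : Ω → α) (a : α) : Ω → ℝ :=
  fun x => if f x = a then p x / law p f a else 0

variable {p}

lemma law_nonneg (hp0 : ∀ x, 0 ≤ p x) (f : Ω → α) (a : α) : 0 ≤ law p f a :=
  sum_nonneg fun x _ => by split <;> simp [hp0]

lemma le_law_apply (hp0 : ∀ x, 0 ≤ p x) (f : Ω → α) (x : Ω) : p x ≤ law p f (f x) := by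
  classical
  have := single_le_sum (f := fun y => if f y = f x then p y else 0)
    (fun y _ => by split <;> simp [hp0]) (mem_univ x)
  simpa [law] using this

lemma sum_law_mul [Fintype α] (f : Ω → α) (φ : α → ℝ) :
    ∑ a, law p f a * φ a = ∑ x, p x * φ (f x) := by
  classical
  simp only [law, sum_mul, ite_mul, zero_mul]
  rw [sum_comm]
  exact sum_congr rfl fun x _ => by simp

lemma sum_law [Fintype α] (hp1 : ∑ x, p x = 1) (f : Ω → α) : ∑ a, law p f a = 1 := by
  simpa [hp1] using sum_law_mul (p := p) f (fun _ => 1)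

lemma sum_law_pair_right [Fintype β] (f : Ω → α) (g : Ω → β) (a : α) :
    ∑ b, law p (fun x => (f x, g x)) (a, b) = law p f a := by
  classical
  simp only [law, Prod.mk.injEq]
  rw [sum_comm]
  refine sum_congr rfl fun x _ => ?_
  by_cases h : f x = a <;> simp [h]

lemma law_pair_le [Fintype β] (hp0 : ∀ x, 0 ≤ p x) (f : Ω → α) (g : Ω → β) (a : α)
    (b : β) :
    law p (fun x => (f x, g x)) (a, b) ≤ law p f a := by
  rw [← sum_law_pair_right f g a]
  exact single_le_sum (fun b _ => law_nonneg hp0 _ _) (mem_univ b)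

lemma law_condOn (f : Ω → α) (g : Ω → β) (a : α) (b : β) :
    law (condOn p f a) g b = law p (fun x => (f x, g x)) (a, b) / law p f a := by
  classical
  simp only [law, condOn, sum_div, Prod.mk.injEq]
  refine sum_congr rfl fun x _ => ?_
  by_cases ha : f x = a <;> by_cases hb : g x = b <;> simp [ha, hb]

lemma entropy_law [Fintype α] (f : Ω → α) :
    entropy (law p f) = -∑ x, p x * log (law p f (f x)) := by
  rw [entropy, sum_law_mul]

lemma law_apply_congr {f : Ω → α} {g : Ω → β} (hfg : ∀ x y, f x = f y ↔ g x = g y)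
    (x : Ω) :
    law p f (f x) = law p g (g x) := by
  classical
  simp only [law, hfg]

lemma entropy_law_congr [Fintype α] [Fintype β] {f : Ω → α} {g : Ω → β}
    (hfg : ∀ x y, f x = f y ↔ g x = g y) :
    entropy (law p f) = entropy (law p g) := by
  simp only [entropy_law, law_apply_congr hfg]

lemma sum_law_mul_entropy_condOn [Fintype α] [Fintype β] (hp0 : ∀ x, 0 ≤ p x)
    (f : Ω → α) (g : Ω → β) :
    ∑ a, law p f a * entropy (law (condOn p f a) g) =
      entropy (law p fun x => (f x, g x)) - entropy (law p f) := by
  have hcell : ∀ a, law p f a * entropy (law (condOn p f a) g) =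
      law p f a * log (law p f a) -
        ∑ b, law p (fun x => (f x, g x)) (a, b) * log (law p (fun x => (f x, g x)) (a, b)) := by
    intro a
    simp only [entropy, law_condOn, mul_neg, mul_sum]
    rw [sum_congr rfl fun b _ =>
      mul_div_mul_log_div (law_nonneg hp0 _ _) (law_pair_le hp0 f g a b)]
    simp only [mul_sub, sum_sub_distrib, ← sum_mul, sum_law_pair_right]
    ring
  rw [sum_congr rfl fun a _ => hcell a, sum_sub_distrib, entropy, entropy,
    Fintype.sum_prod_type]
  ring

lemma sum_mul_law_ratio_le_one [Fintype α] [Fintype β] [Fintype γ] (hp0 : ∀ x, 0 ≤ p x)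
    (hp1 : ∑ x, p x = 1) (f : Ω → α) (g : Ω → β) (k : Ω → γ) :
    ∑ x, p x * (law p (fun x => (f x, g x)) (f x, g x) * law p (fun x => (f x, k x)) (f x, k x) /
      (law p (fun x => (f x, g x, k x)) (f x, g x, k x) * law p f (f x))) ≤ 1 := by
  set Lfg := law p fun x => (f x, g x)
  set Lfk := law p fun x => (f x, k x)
  set L := law p fun x => (f x, g x, k x)
  calc _ = ∑ v : α × β × γ,
          L v * (Lfg (v.1, v.2.1) * Lfk (v.1, v.2.2) / (L v * law p f v.1)) :=
        (sum_law_mul _ fun v => Lfg (v.1, v.2.1) * Lfk (v.1, v.2.2) / (L v * law p f v.1)).symm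
    _ ≤ ∑ v : α × β × γ, Lfg (v.1, v.2.1) * Lfk (v.1, v.2.2) / law p f v.1 := by
        refine sum_le_sum fun v _ => ?_
        have hLv : 0 ≤ L v := law_nonneg hp0 _ v
        rcases hLv.eq_or_lt with hv | hv
        · rw [← hv, zero_mul]
          exact div_nonneg (mul_nonneg (law_nonneg hp0 _ _) (law_nonneg hp0 _ _))
            (law_nonneg hp0 _ _)
        · rw [← mul_div_assoc, mul_div_mul_left _ _ hv.ne']
    _ = ∑ a, law p f a * law p f a / law p f a := by
        simp only [Fintype.sum_prod_type, ← sum_div, ← sum_mul_sum, Lfg, Lfk,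
          sum_law_pair_right]
    _ ≤ ∑ a, law p f a := sum_le_sum fun a _ => by
        rw [mul_self_div_self]
    _ = 1 := sum_law hp1 f

lemma entropy_law_submodular [Fintype α] [Fintype β] [Fintype γ] (hp0 : ∀ x, 0 ≤ p x)
    (hp1 : ∑ x, p x = 1) (f : Ω → α) (g : Ω → β) (k : Ω → γ) :
    entropy (law p fun x => (f x, g x, k x)) + entropy (law p f) ≤
      entropy (law p fun x => (f x, g x)) + entropy (law p fun x => (f x, k x)) := by
  simp only [entropy_law]
  set Lfg := law p fun x => (f x, g x)
  set Lfk := law p fun x => (f x, k x)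
  set L := law p fun x => (f x, g x, k x)
  have hpoint : ∀ x,
      p x * (1 - Lfg (f x, g x) * Lfk (f x, k x) / (L (f x, g x, k x) * law p f (f x))) ≤
        p x * (log (L (f x, g x, k x)) + log (law p f (f x)) - log (Lfg (f x, g x)) -
          log (Lfk (f x, k x))) := fun x =>
    mul_one_sub_div_le_mul_log (hp0 x) (le_law_apply hp0 _ x) (le_law_apply hp0 _ x)
      (le_law_apply hp0 _ x) (le_law_apply hp0 _ x)
  have h := sum_le_sum fun x (_ : x ∈ univ) => hpoint x
  simp only [mul_sub, mul_one, mul_add, sum_sub_distrib, sum_add_distrib, hp1] at h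
  linarith [sum_mul_law_ratio_le_one hp0 hp1 f g k]

end Law

lemma Finset.restrict_eq_restrict_iff {ι : Type*} {κ : ι → Type*} {s : Finset ι}
    {x y : ∀ i, κ i} : s.restrict x = s.restrict y ↔ ∀ i ∈ s, x i = y i := by
  simp [funext_iff]

section JointEntropy

variable (p : (∀ i, X i) → ℝ)

def jointEntropy (C : Finset (Fin n)) : ℝ :=
  entropy (law p C.restrict)

/-- `H(X_i | X_C)`. -/
def condEntropy (i : Fin n) (C : Finset (Fin n)) : ℝ :=
  jointEntropy p (insert i C) - jointEntropy p C

lemma subMarginal_eq_law (C : Finset (Fin n)) : subMarginal p C = law p C.restrict := by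
  funext z
  refine sum_congr rfl fun x _ => ?_
  congr 1
  exact propext funext_iff.symm

lemma condDist_eq_condOn (C : Finset (Fin n)) (z : ∀ i : C, X i.1) :
    condDist p C z = condOn p C.restrict z := by
  funext x
  rw [condDist, condOn, subMarginal_eq_law]
  congr 1
  exact propext funext_iff.symm

variable {p}

lemma jointEntropy_empty (hp1 : ∑ x, p x = 1) : jointEntropy p ∅ = 0 := by
  have h : ∀ z, law p (∅ : Finset (Fin n)).restrict z = 1 := fun z => by
    simpa [law, Subsingleton.elim _ z] using hp1
  simp [jointEntropy, entropy, h]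

lemma jointEntropy_singleton (i : Fin n) : jointEntropy p {i} = entropy (marginal p i) :=
  entropy_law_congr fun x y => by simp [Finset.restrict_eq_restrict_iff]

lemma entropy_law_restrict_pair (S C : Finset (Fin n)) :
    entropy (law p fun x => (C.restrict x, S.restrict x)) = jointEntropy p (S ∪ C) :=
  entropy_law_congr fun x y => by
    simp only [Prod.mk.injEq, Finset.restrict_eq_restrict_iff, mem_union, or_imp, forall_and,
      and_comm]

lemma sum_law_mul_jointEntropy_condOn (hp0 : ∀ x, 0 ≤ p x) (S C : Finset (Fin n)) :
    ∑ z, law p C.restrict z * jointEntropy (condOn p C.restrict z) S =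
      jointEntropy p (S ∪ C) - jointEntropy p C := by
  rw [← entropy_law_restrict_pair]
  exact sum_law_mul_entropy_condOn hp0 _ _

lemma entropy_subMarginal (S : Finset (Fin n)) : entropy (subMarginal p S) = jointEntropy p S := by
  rw [subMarginal_eq_law, jointEntropy]

lemma expCondTC_eq (hp0 : ∀ x, 0 ≤ p x) (S C : Finset (Fin n)) :
    expCondTC p S C =
      ∑ i ∈ S, condEntropy p i C - (jointEntropy p (S ∪ C) - jointEntropy p C) := by
  simp only [expCondTC, TCsub, entropy_subMarginal, ← jointEntropy_singleton]
  simp only [subMarginal_eq_law, condDist_eq_condOn, mul_sub, mul_sum, sum_sub_distrib]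
  rw [sum_comm, sum_law_mul_jointEntropy_condOn hp0]
  congr 1
  refine sum_congr rfl fun i _ => ?_
  rw [sum_law_mul_jointEntropy_condOn hp0, condEntropy, insert_eq]

lemma condEntropy_antitone (hp0 : ∀ x, 0 ≤ p x) (hp1 : ∑ x, p x = 1) (i : Fin n)
    {C D : Finset (Fin n)} (hCD : C ⊆ D) : condEntropy p i D ≤ condEntropy p i C := by
  have htriple : entropy (law p fun x => (C.restrict x, x i, D.restrict x)) =
      jointEntropy p (insert i D) := entropy_law_congr fun x y => by
    simp only [Prod.mk.injEq, Finset.restrict_eq_restrict_iff, mem_insert, or_imp, forall_and,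
      forall_eq, and_iff_right_iff_imp]
    exact fun ⟨_, hD⟩ j hj => hD j (hCD hj)
  have hleft : entropy (law p fun x => (C.restrict x, x i)) = jointEntropy p (insert i C) :=
    entropy_law_congr fun x y => by
      simp only [Prod.mk.injEq, Finset.restrict_eq_restrict_iff, mem_insert, or_imp, forall_and,
        forall_eq, and_comm]
  have hright : entropy (law p fun x => (C.restrict x, D.restrict x)) = jointEntropy p D := by
    rw [entropy_law_restrict_pair, union_eq_left.2 hCD]
  have h := entropy_law_submodular hp0 hp1 C.restrict (fun x => x i) D.restrict
  rw [htriple, hleft, hright] at h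
  rw [condEntropy, condEntropy]
  linarith [show entropy (law p C.restrict) = jointEntropy p C from rfl]

lemma condEntropy_nonneg (hp0 : ∀ x, 0 ≤ p x) (hp1 : ∑ x, p x = 1) (i : Fin n)
    (C : Finset (Fin n)) : 0 ≤ condEntropy p i C := by
  simpa [condEntropy] using condEntropy_antitone hp0 hp1 i (subset_univ C)

lemma condEntropy_empty (hp1 : ∑ x, p x = 1) (i : Fin n) :
    condEntropy p i ∅ = entropy (marginal p i) := by
  rw [condEntropy, jointEntropy_empty hp1, sub_zero, insert_empty, jointEntropy_singleton]

end JointEntropy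

section Prefix

/-- The first `j` elements in the order `σ 0, σ 1, …`. -/
def prefixSet (σ : Equiv.Perm (Fin n)) (j : ℕ) : Finset (Fin n) :=
  univ.filter fun a => (σ.symm a : ℕ) < j

lemma mem_prefixSet {σ : Equiv.Perm (Fin n)} {j : ℕ} {a : Fin n} :
    a ∈ prefixSet σ j ↔ (σ.symm a : ℕ) < j := by
  simp [prefixSet]

lemma prefixSet_zero (σ : Equiv.Perm (Fin n)) : prefixSet σ 0 = ∅ := by
  ext a
  simp [mem_prefixSet]

lemma prefixSet_of_le (σ : Equiv.Perm (Fin n)) {j : ℕ} (hj : n ≤ j) :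
    prefixSet σ j = univ := by
  ext a
  simpa [mem_prefixSet] using (σ.symm a).isLt.trans_le hj

lemma prefixSet_mono (σ : Equiv.Perm (Fin n)) : Monotone (prefixSet σ) :=
  fun _ _ hjk _ ha => mem_prefixSet.2 ((mem_prefixSet.1 ha).trans_le hjk)

lemma prefixSet_succ (σ : Equiv.Perm (Fin n)) (j : Fin n) :
    prefixSet σ (j + 1) = insert (σ j) (prefixSet σ j) := by
  ext a
  rw [mem_insert, mem_prefixSet, mem_prefixSet, ← Equiv.symm_apply_eq, Fin.ext_iff]
  omega

lemma sum_sub_prefixSet (h : Finset (Fin n) → ℝ) (σ : Equiv.Perm (Fin n)) :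
    ∑ i, (h (insert i (prefixSet σ (σ.symm i))) - h (prefixSet σ (σ.symm i))) =
      h univ - h ∅ := by
  rw [← Equiv.sum_comp σ]
  simp only [Equiv.symm_apply_apply, ← prefixSet_succ]
  rw [Fin.sum_univ_eq_sum_range (fun j => h (prefixSet σ (j + 1)) - h (prefixSet σ j)),
    sum_range_sub (fun j => h (prefixSet σ j)), prefixSet_of_le σ le_rfl, prefixSet_zero]

end Prefix

section Blocks

variable {K : ℕ}

lemma mem_permBlock {σ : Equiv.Perm (Fin n)} {k : Fin K} {a : Fin n} :
    a ∈ permBlock σ k ↔ (σ.symm a : ℕ) / (n / K) = k := by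
  simp [permBlock]

lemma permEarlier_eq_prefixSet (hK : 0 < K) (hdvd : K ∣ n) (σ : Equiv.Perm (Fin n))
    (k : Fin K) : permEarlier σ k = prefixSet σ (n / K * k) := by
  ext a
  have hm : 0 < n / K := Nat.div_pos (Nat.le_of_dvd a.pos hdvd) hK
  simp only [permEarlier, mem_filter, mem_univ, true_and, mem_prefixSet]
  rw [Nat.div_lt_iff_lt_mul hm, mul_comm]

lemma permBlock_union_permEarlier (hK : 0 < K) (hdvd : K ∣ n) (σ : Equiv.Perm (Fin n))
    (k : Fin K) : permBlock σ k ∪ permEarlier σ k = prefixSet σ (n / K * (k + 1)) := by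
  ext a
  have hm : 0 < n / K := Nat.div_pos (Nat.le_of_dvd a.pos hdvd) hK
  rw [mem_union, mem_permBlock, permEarlier_eq_prefixSet hK hdvd, mem_prefixSet, mem_prefixSet,
    mul_comm, ← Nat.div_lt_iff_lt_mul hm, mul_comm, ← Nat.div_lt_iff_lt_mul hm]
  omega

lemma sum_permBlock (hK : 0 < K) (hdvd : K ∣ n) (σ : Equiv.Perm (Fin n)) (f : Fin n → ℝ) :
    ∑ k : Fin K, ∑ i ∈ permBlock σ k, f i = ∑ i, f i := by
  rw [← sum_fiberwise_of_maps_to (g := fun i => (σ.symm i : ℕ) / (n / K)) (t := range K)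
    (fun i _ => mem_range.2 ?_), ← Fin.sum_univ_eq_sum_range]
  · rfl
  have hm : 0 < n / K := Nat.div_pos (Nat.le_of_dvd i.pos hdvd) hK
  rw [Nat.div_lt_iff_lt_mul hm, Nat.mul_div_cancel' hdvd]
  exact (σ.symm i).isLt

lemma sum_sub_prefixSet_blocks (h : Finset (Fin n) → ℝ) (hdvd : K ∣ n)
    (σ : Equiv.Perm (Fin n)) :
    ∑ k : Fin K, (h (prefixSet σ (n / K * (k + 1))) - h (prefixSet σ (n / K * k))) =
      h univ - h ∅ := by
  rw [Fin.sum_univ_eq_sum_range (fun k => h (prefixSet σ (n / K * (k + 1))) -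
      h (prefixSet σ (n / K * k))), sum_range_sub (fun k => h (prefixSet σ (n / K * k))),
    prefixSet_of_le σ (Nat.div_mul_cancel hdvd).ge, mul_zero, prefixSet_zero]

/-- `H(X_i | blocks of size m before the block of i) - H(X_i | variables before i)` along `σ`. -/
def blockGap (p : (∀ i, X i) → ℝ) (m : ℕ) (i : Fin n) (σ : Equiv.Perm (Fin n)) : ℝ :=
  condEntropy p i (prefixSet σ (m * ((σ.symm i : ℕ) / m))) -
    condEntropy p i (prefixSet σ (σ.symm i))

variable {p : (∀ i, X i) → ℝ}

lemma sum_expCondTC_permBlock (hp0 : ∀ x, 0 ≤ p x) (hK : 0 < K) (hdvd : K ∣ n)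
    (σ : Equiv.Perm (Fin n)) :
    ∑ k : Fin K, expCondTC p (permBlock σ k) (permEarlier σ k) =
      ∑ i, blockGap p (n / K) i σ := by
  simp only [expCondTC_eq hp0, permBlock_union_permEarlier hK hdvd]
  simp only [permEarlier_eq_prefixSet hK hdvd]
  rw [sum_sub_distrib, sum_sub_prefixSet_blocks _ hdvd, ← sum_sub_prefixSet (jointEntropy p) σ]
  simp only [blockGap]
  conv_rhs => rw [sum_sub_distrib]
  congr 1
  refine (sum_congr rfl fun k _ => sum_congr rfl fun i hi => ?_).trans (sum_permBlock hK hdvd σ _)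
  rw [mem_permBlock.1 hi]

end Blocks

section Insertion

open Equiv Fin

lemma cycleIcc_val_lt_iff {i j x : Fin n} {m : ℕ} (hm : m ≤ i) :
    (cycleIcc i j x : ℕ) < m ↔ (x : ℕ) < m := by
  by_cases hx : x < i
  · rw [cycleIcc_of_lt hx]
  have hy : ¬ cycleIcc i j x < i := fun hy =>
    hx (by rwa [(cycleIcc i j).injective (cycleIcc_of_lt hy)] at hy)
  rw [Fin.lt_def] at hx hy
  omega

lemma symm_mul_inv_apply (τ ρ : Perm (Fin n)) (a : Fin n) :
    (τ * ρ⁻¹).symm a = ρ (τ.symm a) :=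
  rfl

lemma prefixSet_mul_inv_cycleIcc (τ : Perm (Fin n)) {t u : Fin n} {j : ℕ} (hj : j ≤ t) :
    prefixSet (τ * (cycleIcc t u)⁻¹) j = prefixSet τ j := by
  ext a
  rw [mem_prefixSet, mem_prefixSet, symm_mul_inv_apply, cycleIcc_val_lt_iff hj]

variable [NeZero n]

lemma symm_mul_inv_cycleIcc_eq_iff (τ : Perm (Fin n)) (i t : Fin n) :
    (τ * (cycleIcc t ⊤)⁻¹).symm i = t ↔ τ.symm i = ⊤ := by
  rw [symm_mul_inv_apply]
  constructor
  · exact fun h => (cycleIcc t ⊤).injective (h.trans (cycleIcc_of_last le_top).symm)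
  · exact fun h => by rw [h, cycleIcc_of_last le_top]

/-- Every order is obtained exactly once from an order ending with `i` by moving `i` forward
to some position `t`, keeping the relative order of the other elements. -/
lemma sum_perm_eq_sum_mul_inv_cycleIcc {M : Type*} [AddCommMonoid M] (i : Fin n)
    (F : Perm (Fin n) → M) :
    ∑ σ, F σ = ∑ τ with τ.symm i = ⊤, ∑ t, F (τ * (cycleIcc t ⊤)⁻¹) := by
  rw [sum_comm, ← sum_fiberwise univ (fun σ => σ.symm i) F]
  refine sum_congr rfl fun t _ => ?_
  rw [sum_filter, sum_filter]
  refine (Fintype.sum_equiv (Equiv.mulRight (cycleIcc t ⊤)⁻¹) _ _ fun τ => ?_).symm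
  simp only [coe_mulRight, symm_mul_inv_cycleIcc_eq_iff]

lemma card_filter_symm_eq_top_mul (i : Fin n) :
    #{τ : Perm (Fin n) | τ.symm i = ⊤} * n = Nat.factorial n := by
  have h := sum_perm_eq_sum_mul_inv_cycleIcc i fun _ => (1 : ℕ)
  simp only [Finset.sum_const, smul_eq_mul, mul_one, card_univ, Fintype.card_perm,
    Fintype.card_fin] at h
  exact h.symm

end Insertion

lemma sum_range_sub_blockStart_le {G : ℕ → ℝ} (hG : Antitone G) (m K : ℕ) :
    ∑ t ∈ range (m * K), (G (m * (t / m)) - G t) ≤ m * (G 0 - G (m * K)) := by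
  induction K with
  | zero => simp
  | succ K ih =>
    have hblock : ∀ s ∈ range m, G (m * ((m * K + s) / m)) - G (m * K + s) ≤
        G (m * K) - G (m * (K + 1)) := fun s hs => by
      have hs := mem_range.1 hs
      rw [Nat.mul_add_div (by omega), Nat.div_eq_of_lt hs, add_zero]
      exact sub_le_sub_left (hG (by rw [mul_add_one]; omega)) _
    calc ∑ t ∈ range (m * (K + 1)), (G (m * (t / m)) - G t)
        ≤ m * (G 0 - G (m * K)) + ∑ _s ∈ range m, (G (m * K) - G (m * (K + 1))) := by
          rw [mul_add_one, sum_range_add]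
          exact add_le_add ih (sum_le_sum hblock)
      _ = m * (G 0 - G (m * (K + 1))) := by
          rw [sum_const, card_range, nsmul_eq_mul]
          ring

section Averaging

variable {p : (∀ i, X i) → ℝ}

/-- In `τ * (cycleIcc t ⊤)⁻¹` the prefixes up to the position `t` of `i` are those of `τ`, so
all `n` gaps are measured along the single chain of prefixes of `τ`. -/
lemma sum_blockGap_mul_inv_cycleIcc_le (hp0 : ∀ x, 0 ≤ p x) (hp1 : ∑ x, p x = 1) [NeZero n]
    {m K : ℕ} (hmK : m * K = n) (i : Fin n) {τ : Equiv.Perm (Fin n)} (hτ : τ.symm i = ⊤) :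
    ∑ t, blockGap p m i (τ * (Fin.cycleIcc t ⊤)⁻¹) ≤ m * entropy (marginal p i) := by
  set G : ℕ → ℝ := fun j => condEntropy p i (prefixSet τ j)
  have hG : Antitone G := fun j k hjk => condEntropy_antitone hp0 hp1 i (prefixSet_mono τ hjk)
  calc _ = ∑ t ∈ range (m * K), (G (m * (t / m)) - G t) := by
        rw [hmK, ← Fin.sum_univ_eq_sum_range (fun t => G (m * (t / m)) - G t)]
        refine sum_congr rfl fun t _ => ?_
        rw [blockGap, (symm_mul_inv_cycleIcc_eq_iff τ i t).2 hτ,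
          prefixSet_mul_inv_cycleIcc τ (Nat.mul_div_le t m), prefixSet_mul_inv_cycleIcc τ le_rfl]
    _ ≤ m * (G 0 - G (m * K)) := sum_range_sub_blockStart_le hG m K
    _ ≤ m * G 0 := mul_le_mul_of_nonneg_left
        (sub_le_self _ (condEntropy_nonneg hp0 hp1 i _)) (Nat.cast_nonneg m)
    _ = m * entropy (marginal p i) := by
        simp only [G, prefixSet_zero, condEntropy_empty hp1]

lemma sum_perm_blockGap_div_le (hp0 : ∀ x, 0 ≤ p x) (hp1 : ∑ x, p x = 1) {m K : ℕ}
    (hmK : m * K = n) (i : Fin n) :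
    (∑ σ, blockGap p m i σ) / Nat.factorial n ≤ entropy (marginal p i) / K := by
  have : NeZero n := NeZero.of_pos i.pos
  have hK : 0 < K := Nat.pos_of_ne_zero <| by
    rintro rfl
    exact i.pos.ne' (by simpa using hmK.symm)
  have hcard : (#{τ : Equiv.Perm (Fin n) | τ.symm i = ⊤} : ℝ) * n = Nat.factorial n := by
    exact_mod_cast card_filter_symm_eq_top_mul i
  rw [div_le_div_iff₀ (by positivity) (by exact_mod_cast hK), sum_perm_eq_sum_mul_inv_cycleIcc i]
  calc _ ≤ (∑ τ : Equiv.Perm (Fin n) with τ.symm i = ⊤, m * entropy (marginal p i)) * K :=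
        mul_le_mul_of_nonneg_right (sum_le_sum fun τ hτ =>
          sum_blockGap_mul_inv_cycleIcc_le hp0 hp1 hmK i (mem_filter.1 hτ).2) (Nat.cast_nonneg K)
    _ = entropy (marginal p i) * Nat.factorial n := by
        have hn : (n : ℝ) = m * K := by exact_mod_cast hmK.symm
        rw [sum_const, nsmul_eq_mul, ← hcard, hn]
        ring

end Averaging

/-- Mixture bound on the cumulative conditional total correlation over a
uniformly random order: for a uniformly random permutation `σ` of the `n`
variables partitioned into `K` consecutive blocks of equal size `n / K`,
the expected cumulative conditional total correlation is at most
`(1/K)·∑ i H(X i)`. -/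
theorem stmt_17 (n K : ℕ) (hK : 0 < K) (hdvd : K ∣ n)
    (X : Fin n → Type*) [∀ i, Fintype (X i)]
    (p : (∀ i, X i) → ℝ) (hp0 : ∀ x, 0 ≤ p x) (hp1 : ∑ x, p x = 1) :
    (1 / (Nat.factorial n : ℝ)) *
        (∑ σ : Equiv.Perm (Fin n), ∑ k : Fin K,
          expCondTC p (permBlock σ k) (permEarlier σ k)) ≤
      (1 / (K : ℝ)) * ∑ i, entropy (marginal p i) := by
  simp only [sum_expCondTC_permBlock hp0 hK hdvd]
  rw [sum_comm, one_div_mul_eq_div, sum_div, mul_sum]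
  refine sum_le_sum fun i _ => ?_
  rw [one_div_mul_eq_div]
  exact sum_perm_blockGap_div_le hp0 hp1 (Nat.div_mul_cancel hdvd) i

end
end
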